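/- For h = √2 and t = arccos(-7/8), i.e., e^{it} = -7/8 + i√15/8, the 3×3 matrices I₁ = diag(-1,1,-1), I₂ = [[-1,-2,2],[0,1,-2],[0,0,-1]], I₃ = [[0,0,1/4],[0,-1,0],[4,0,0]], I₄ = [[-(2+i√15)/8, (6-i√15)/8, 51/32],[1/2,-1/2,(6+i√15)/8],[1/2,1/2,(-2+i√15)/8]] satisfy I_i² = Id for all i, (I₁I₃)² = Id, (I₂I₄)² = Id, and (I₁I₄)³ = Id (up to sign), and each I_i preserves the Hermitian form J = [[0,0,1],[0,1,0],[1,0,0]]: I_i* J I_i = J. -/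
import Mathlib


open Matrix

noncomputable section

def Jform : Matrix (Fin 3) (Fin 3) ℂ :=
  !![0, 0, 1;
     0, 1, 0;
     1, 0, 0]

def N1 : Matrix (Fin 3) (Fin 3) ℂ :=
  !![-1, 0, 0;
     0, 1, 0;
     0, 0, -1]

def N2 : Matrix (Fin 3) (Fin 3) ℂ :=
  !![-1, -2, 2;
     0, 1, -2;
     0, 0, -1]

def N3 : Matrix (Fin 3) (Fin 3) ℂ :=
  !![0, 0, 1 / 4;
     0, -1, 0;
     4, 0, 0]

def N4 : Matrix (Fin 3) (Fin 3) ℂ :=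
  !![-(2 + Complex.I * Real.sqrt 15) / 8, (6 - Complex.I * Real.sqrt 15) / 8, 51 / 32;
     1 / 2, -(1 / 2), (6 + Complex.I * Real.sqrt 15) / 8;
     1 / 2, 1 / 2, (-2 + Complex.I * Real.sqrt 15) / 8]

end

lemma ct3 (a b c d e f g h i : ℂ) :
    (!![a,b,c;d,e,f;g,h,i])ᴴ =
      !![star a, star d, star g; star b, star e, star h; star c, star f, star i] := by
  ext i j; fin_cases i <;> fin_cases j <;> simp

lemma h15 : ((Real.sqrt 15 : ℂ)) ^ 2 = 15 := by
  norm_cast; rw [Real.sq_sqrt (by norm_num)]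

lemma h15' : ((Real.sqrt 15 : ℂ)) ^ 3 = 15 * (Real.sqrt 15 : ℂ) := by
  rw [pow_succ, h15]

theorem two_dim_reflections :
    N1 ^ 2 = 1 ∧ N2 ^ 2 = 1 ∧ N3 ^ 2 = 1 ∧ N4 ^ 2 = 1 ∧
    (N1 * N3) ^ 2 = 1 ∧ (N2 * N4) ^ 2 = 1 ∧
    ((N1 * N4) ^ 3 = 1 ∨ (N1 * N4) ^ 3 = -1) ∧
    N1ᴴ * Jform * N1 = Jform ∧ N2ᴴ * Jform * N2 = Jform ∧
    N3ᴴ * Jform * N3 = Jform ∧ N4ᴴ * Jform * N4 = Jform := by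
  refine ⟨?_, ?_, ?_, ?_, ?_, ?_, Or.inl ?_, ?_, ?_, ?_, ?_⟩
  · rw [sq, N1, Matrix.mul_fin_three, Matrix.one_fin_three]; congr 1; norm_num
  · rw [sq, N2, Matrix.mul_fin_three, Matrix.one_fin_three]; congr 1; norm_num
  · rw [sq, N3, Matrix.mul_fin_three, Matrix.one_fin_three]; congr 1; norm_num
  · rw [sq, N4, Matrix.mul_fin_three, Matrix.one_fin_three]; congr 1
    ring_nf; rw [h15]; norm_num
  · rw [sq, N1, N3]; simp only [Matrix.mul_fin_three]
    rw [Matrix.one_fin_three]; congr 1; norm_num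
  · rw [sq, N2, N4]; simp only [Matrix.mul_fin_three]
    rw [Matrix.one_fin_three]; congr 1
    ring_nf; rw [h15]; norm_num
  · rw [pow_succ, sq, N1, N4]; simp only [Matrix.mul_fin_three]
    rw [Matrix.one_fin_three]; congr 1
    ring_nf
    simp only [Complex.I_sq, show Complex.I ^ 3 = -Complex.I by rw [pow_succ, Complex.I_sq]; ring]
    ring_nf
    rw [h15, h15']
    ring_nf
  · rw [N1, Jform, ct3]
    simp only [Complex.star_def, map_neg, _root_.map_one, map_zero]
    simp only [Matrix.mul_fin_three]; congr 1; norm_num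
  · rw [N2, Jform, ct3]
    simp only [Complex.star_def, map_neg, _root_.map_one, map_zero, map_ofNat]
    simp only [Matrix.mul_fin_three]; congr 1; norm_num
  · rw [N3, Jform, ct3]
    simp only [Complex.star_def, map_neg, map_div₀, _root_.map_one, map_zero, map_ofNat]
    simp only [Matrix.mul_fin_three]; congr 1; norm_num
  · rw [N4, Jform, ct3]
    simp only [Complex.star_def, map_div₀, map_neg, map_add, map_sub, _root_.map_mul,
      Complex.conj_I, Complex.conj_ofReal, map_ofNat, _root_.map_one, map_zero]
    simp only [Matrix.mul_fin_three]; congr 1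
    ring_nf; rw [h15]; norm_num
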